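/- arXiv:2507.12117 — 8 statements merged into one kernel-verified Lean document; each statement's English description precedes it below -/
import Mathlib

section
/- For every 2×2 complex matrix ρ, define P_ρ(θ,φ) = (1/(4π))·( Tr(ρ) + 3Tr(ρσx)·sinθcosφ + 3Tr(ρσy)·sinθsinφ + 3Tr(ρσz)·cosθ ). Then the matrix-valued integral ∫₀^{2π}∫₀^π P_ρ(θ,φ) |θ,φ⟩⟨θ,φ| sinθ dθ dφ equals ρ; i.e., P_ρ is a Glauber–Sudarshan P function for ρ with respect to the spin coherent states. -/
open Matrix Complex Real MeasureTheory

noncomputable section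

/-- The spin coherent state |θ,φ⟩ = cos(θ/2)|0⟩ + e^{iφ} sin(θ/2)|1⟩. -/
def cohVec (θ φ : ℝ) : Fin 2 → ℂ :=
  ![((Real.cos (θ / 2) : ℝ) : ℂ),
    Complex.exp (Complex.I * (φ : ℂ)) * ((Real.sin (θ / 2) : ℝ) : ℂ)]

def σx : Matrix (Fin 2) (Fin 2) ℂ := !![0, 1; 1, 0]
def σy : Matrix (Fin 2) (Fin 2) ℂ := !![0, -Complex.I; Complex.I, 0]
def σz : Matrix (Fin 2) (Fin 2) ℂ := !![1, 0; 0, -1]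

/-- The P function defined by the Pauli expectation expansion. -/
def Pfun (ρ : Matrix (Fin 2) (Fin 2) ℂ) (θ φ : ℝ) : ℂ :=
  (1 / (4 * Real.pi) : ℂ) *
    (Matrix.trace ρ
      + 3 * Matrix.trace (ρ * σx) * ((Real.sin θ * Real.cos φ : ℝ) : ℂ)
      + 3 * Matrix.trace (ρ * σy) * ((Real.sin θ * Real.sin φ : ℝ) : ℂ)
      + 3 * Matrix.trace (ρ * σz) * ((Real.cos θ : ℝ) : ℂ))

/-! The projector onto the coherent state |θ,φ⟩ is `½ (1 + n·σ)`, where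
`n = (sin θ cos φ, sin θ sin φ, cos θ)` is the Bloch vector, and `P_ρ = Σₐ tr(ρ σₐ) hₐ / ‖hₐ‖²`,
where `h = (1, n_x, n_y, n_z)` and `σ = (1, σx, σy, σz)`. The functions `hₐ` are orthogonal on
the sphere (`∫ 1 = 4π`, `∫ nᵢ = 0`, `∫ nᵢ nⱼ = 4π/3 δᵢⱼ`), so the integral collapses to
`½ Σₐ tr(ρ σₐ) σₐ`, which is `ρ` because the four matrices `σₐ` are orthogonal for the trace form,
each of square norm `2`. -/

namespace SpinCoherent

lemma integral_integral_mul (u v : ℝ → ℝ) (a b c d : ℝ) :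
    ∫ y in c..d, ∫ x in a..b, u x * v y = (∫ x in a..b, u x) * ∫ y in c..d, v y := by
  simp only [intervalIntegral.integral_mul_const, intervalIntegral.integral_const_mul]

lemma integral_integral_sum_mul_ofReal {ι : Type*} (s : Finset ι) (c : ι → ℂ)
    (g : ι → ℝ → ℝ → ℝ) (hg : ∀ i ∈ s, Continuous fun p : ℝ × ℝ => g i p.1 p.2) (a b a' b' : ℝ) :
    ∫ y in a'..b', ∫ x in a..b, ∑ i ∈ s, c i * (g i x y : ℂ)
      = ∑ i ∈ s, c i * ((∫ y in a'..b', ∫ x in a..b, g i x y : ℝ) : ℂ) := by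
  have hcont : ∀ i ∈ s, ∀ y, Continuous fun x => g i x y := fun i hi y =>
    (hg i hi).comp (continuous_id.prodMk continuous_const)
  have hinner : ∀ y, ∫ x in a..b, ∑ i ∈ s, c i * (g i x y : ℂ)
      = ∑ i ∈ s, c i * ((∫ x in a..b, g i x y : ℝ) : ℂ) := fun y => by
    rw [intervalIntegral.integral_finsetSum (f := fun i x => c i * (g i x y : ℂ)) fun i hi =>
      (continuous_const.mul (continuous_ofReal.comp (hcont i hi y))).intervalIntegrable a b]
    simp only [intervalIntegral.integral_const_mul, intervalIntegral.integral_ofReal]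
  have hpar : ∀ i ∈ s, Continuous fun y => ∫ x in a..b, g i x y := fun i hi =>
    intervalIntegral.continuous_parametric_intervalIntegral_of_continuous'
      (f := fun y x => g i x y) (μ := volume) ((hg i hi).comp continuous_swap) a b
  simp only [hinner]
  rw [intervalIntegral.integral_finsetSum
    (f := fun i y => c i * ((∫ x in a..b, g i x y : ℝ) : ℂ)) fun i hi =>
    (continuous_const.mul (continuous_ofReal.comp (hpar i hi))).intervalIntegrable a' b']
  simp only [intervalIntegral.integral_const_mul, intervalIntegral.integral_ofReal]

def harmonic (θ φ : ℝ) : Fin 4 → ℝ :=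
  ![1, Real.sin θ * Real.cos φ, Real.sin θ * Real.sin φ, Real.cos θ]

def polarPart (θ : ℝ) : Fin 4 → ℝ := ![1, Real.sin θ, Real.sin θ, Real.cos θ]
def azimuthalPart (φ : ℝ) : Fin 4 → ℝ := ![1, Real.cos φ, Real.sin φ, 1]

lemma harmonic_eq_polarPart_mul_azimuthalPart (θ φ : ℝ) (a : Fin 4) :
    harmonic θ φ a = polarPart θ a * azimuthalPart φ a := by
  fin_cases a <;> simp [harmonic, polarPart, azimuthalPart]

def harmonicNormSq : Fin 4 → ℝ := ![4 * π, 4 * π / 3, 4 * π / 3, 4 * π / 3]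

lemma harmonicNormSq_ne_zero (a : Fin 4) : harmonicNormSq a ≠ 0 := by
  fin_cases a <;> simp [harmonicNormSq, pi_ne_zero]

lemma integral_harmonic_mul_harmonic (a b : Fin 4) :
    ∫ φ in (0:ℝ)..2 * π, ∫ θ in (0:ℝ)..π, harmonic θ φ a * harmonic θ φ b * Real.sin θ
      = if a = b then harmonicNormSq a else 0 := by
  have h : ∀ θ φ, harmonic θ φ a * harmonic θ φ b * Real.sin θ
      = Real.sin θ * (polarPart θ a * polarPart θ b) * (azimuthalPart φ a * azimuthalPart φ b) := by
    intro θ φ; simp only [harmonic_eq_polarPart_mul_azimuthalPart]; ring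
  simp only [h, integral_integral_mul]
  fin_cases a <;> fin_cases b <;>
    simp [polarPart, azimuthalPart, harmonicNormSq, ← sq, ← pow_succ',
      mul_comm (Real.cos _) (Real.sin _)] <;>
    ring

lemma continuous_harmonic (a : Fin 4) : Continuous fun p : ℝ × ℝ => harmonic p.1 p.2 a := by
  fin_cases a <;> simp [harmonic] <;> fun_prop

def pauli : Fin 4 → Matrix (Fin 2) (Fin 2) ℂ := ![1, σx, σy, σz]

lemma sum_trace_mul_pauli_smul_pauli (ρ : Matrix (Fin 2) (Fin 2) ℂ) :
    ∑ a, trace (ρ * pauli a) • pauli a = (2 : ℂ) • ρ := by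
  ext i j
  fin_cases i <;> fin_cases j <;>
    simp [Fin.sum_univ_four, pauli, σx, σy, σz, trace_fin_two, Matrix.mul_apply] <;>
    ring_nf <;> simp [I_sq] <;> ring

lemma vecMulVec_cohVec_star (θ φ : ℝ) :
    vecMulVec (cohVec θ φ) (star (cohVec θ φ))
      = (1 / 2 : ℂ) • ∑ a, (harmonic θ φ a : ℂ) • pauli a := by
  obtain ⟨t, rfl⟩ : ∃ t, θ = 2 * t := ⟨θ / 2, by ring⟩
  ext i j
  fin_cases i <;> fin_cases j <;>
    simp [vecMulVec, cohVec, Fin.sum_univ_four, pauli, σx, σy, σz, harmonic, mul_comm I,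
      Complex.exp_mul_I, Complex.ext_iff, ← Complex.ofReal_cos, ← Complex.ofReal_sin] <;>
    simp only [Real.cos_two_mul, Real.sin_two_mul] <;> (try refine ⟨?_, ?_⟩) <;>
    first
      | ring1
      | linear_combination Real.sin t ^ 2 * Real.sin_sq_add_cos_sq φ + Real.sin_sq_add_cos_sq t

lemma Pfun_eq_sum (ρ : Matrix (Fin 2) (Fin 2) ℂ) (θ φ : ℝ) :
    Pfun ρ θ φ = ∑ a, trace (ρ * pauli a) / harmonicNormSq a * harmonic θ φ a := by
  simp only [Pfun, Fin.sum_univ_four, pauli, harmonic, harmonicNormSq, cons_val_zero,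
    cons_val_one, cons_val, mul_one, ofReal_mul, ofReal_div, ofReal_ofNat, ofReal_one]
  field_simp

lemma Pfun_mul_cohVec_mul_sin_eq_sum (ρ : Matrix (Fin 2) (Fin 2) ℂ) (k l : Fin 2) (θ φ : ℝ) :
    Pfun ρ θ φ * (cohVec θ φ k * (starRingEnd ℂ) (cohVec θ φ l)) * ((Real.sin θ : ℝ) : ℂ)
      = ∑ ab : Fin 4 × Fin 4, trace (ρ * pauli ab.1) / harmonicNormSq ab.1 * (pauli ab.2 k l / 2)
          * ((harmonic θ φ ab.1 * harmonic θ φ ab.2 * Real.sin θ : ℝ) : ℂ) := by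
  have h := congrFun₂ (vecMulVec_cohVec_star θ φ) k l
  simp only [vecMulVec_apply, Pi.star_apply, Complex.star_def, Matrix.smul_apply,
    Matrix.sum_apply, smul_eq_mul] at h
  rw [Pfun_eq_sum, h]
  simp only [Fintype.sum_prod_type, Finset.mul_sum, Finset.sum_mul]
  refine Finset.sum_comm.trans (Finset.sum_congr rfl fun a _ => Finset.sum_congr rfl fun b _ => ?_)
  push_cast
  ring

end SpinCoherent

open SpinCoherent in
/-- ∫ P_ρ(θ,φ) |θ,φ⟩⟨θ,φ| sinθ dθ dφ = ρ (entrywise). -/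
theorem p_function_resolves_state (ρ : Matrix (Fin 2) (Fin 2) ℂ) (k l : Fin 2) :
    (∫ φ in (0:ℝ)..(2 * Real.pi), ∫ θ in (0:ℝ)..Real.pi,
      Pfun ρ θ φ * (cohVec θ φ k * (starRingEnd ℂ) (cohVec θ φ l))
        * ((Real.sin θ : ℝ) : ℂ)) = ρ k l := by
  have hcont : ∀ ab ∈ (Finset.univ : Finset (Fin 4 × Fin 4)), Continuous fun p : ℝ × ℝ =>
      harmonic p.1 p.2 ab.1 * harmonic p.1 p.2 ab.2 * Real.sin p.1 := fun ab _ =>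
    ((continuous_harmonic ab.1).mul (continuous_harmonic ab.2)).mul
      (Real.continuous_sin.comp continuous_fst)
  simp only [Pfun_mul_cohVec_mul_sin_eq_sum]
  rw [integral_integral_sum_mul_ofReal _ _ _ hcont]
  simp only [integral_harmonic_mul_harmonic]
  calc ∑ ab : Fin 4 × Fin 4, trace (ρ * pauli ab.1) / harmonicNormSq ab.1 * (pauli ab.2 k l / 2)
        * ((if ab.1 = ab.2 then harmonicNormSq ab.1 else 0 : ℝ) : ℂ)
      = ∑ a, trace (ρ * pauli a) * pauli a k l / 2 := by
        rw [Fintype.sum_prod_type]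
        refine Finset.sum_congr rfl fun a _ => ?_
        have hN : (harmonicNormSq a : ℂ) ≠ 0 := ofReal_ne_zero.mpr (harmonicNormSq_ne_zero a)
        simp only [apply_ite, ofReal_zero, mul_zero, Finset.sum_ite_eq, Finset.mem_univ, ↓reduceIte]
        field_simp
    _ = ρ k l := by
        have h := congrFun₂ (sum_trace_mul_pauli_smul_pauli ρ) k l
        simp only [Matrix.sum_apply, Matrix.smul_apply, smul_eq_mul] at h
        rw [← Finset.sum_div, h]
        ring
end
end

section
/- Let m be a finite type and let ρ be a complex matrix indexed by m × Fin 2. For every i, j ∈ m, the integral over the sphere (1/(2π)) ∫₀^{2π}∫₀^π ( Σ_{k,l ∈ Fin 2} conj(v(θ,φ)(k)) · ρ((i,k),(j,l)) · v(θ,φ)(l) ) sinθ dθ dφ equals Σ_{k ∈ Fin 2} ρ((i,k),(j,k)), the (i,j) entry of the partial trace of ρ over the qubit factor. In other words, marginalizing the Q function over one qubit's sphere yields the Q function of the reduced state obtained by partial tracing that qubit. -/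
open Matrix Complex Real MeasureTheory

noncomputable section

lemma int_sin_two : ∫ x in (0:ℝ)..Real.pi, Real.sin (2*x) = 0 := by
  rw [intervalIntegral.integral_comp_mul_left (fun x => Real.sin x) (two_ne_zero)]
  norm_num [integral_sin, Real.cos_two_pi]

lemma key1 : ∫ x in (0:ℝ)..Real.pi, Real.cos (x/2)^2 * Real.sin x = 1 := by
  have h : ∀ x : ℝ, Real.cos (x/2)^2 * Real.sin x = Real.sin x / 2 + Real.sin (2*x) / 4 := by
    intro x
    have h1 : Real.cos (x/2)^2 = 1/2 + Real.cos x / 2 := by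
      have := Real.cos_sq (x/2)
      rwa [show 2 * (x/2) = x by ring] at this
    rw [h1, Real.sin_two_mul]; ring
  simp only [h]
  rw [intervalIntegral.integral_add (Continuous.intervalIntegrable (by fun_prop) _ _)
    (Continuous.intervalIntegrable (by fun_prop) _ _),
    intervalIntegral.integral_div, intervalIntegral.integral_div, integral_sin, int_sin_two]
  norm_num [Real.cos_pi]

lemma key2 : ∫ x in (0:ℝ)..Real.pi, Real.sin (x/2)^2 * Real.sin x = 1 := by
  have h : ∀ x : ℝ, Real.sin (x/2)^2 * Real.sin x = Real.sin x / 2 - Real.sin (2*x) / 4 := by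
    intro x
    have h1 : Real.cos (x/2)^2 = 1/2 + Real.cos x / 2 := by
      have := Real.cos_sq (x/2)
      rwa [show 2 * (x/2) = x by ring] at this
    have h2 : Real.sin (x/2)^2 = 1 - Real.cos (x/2)^2 := Real.sin_sq (x/2)
    rw [h2, h1, Real.sin_two_mul]; ring
  simp only [h]
  rw [intervalIntegral.integral_sub (Continuous.intervalIntegrable (by fun_prop) _ _)
    (Continuous.intervalIntegrable (by fun_prop) _ _),
    intervalIntegral.integral_div, intervalIntegral.integral_div, integral_sin, int_sin_two]
  norm_num [Real.cos_pi]

/-- marginalizing the Q function over one qubit's sphere yields the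
Q function of the reduced state obtained by partial tracing that qubit. -/
theorem partial_trace_as_marginalization {m : Type*} [Fintype m]
    (ρ : Matrix (m × Fin 2) (m × Fin 2) ℂ) (i j : m) :
    (1 / (2 * Real.pi) : ℂ) *
      ∫ φ in (0:ℝ)..(2 * Real.pi), ∫ θ in (0:ℝ)..Real.pi,
        (∑ k, ∑ l, (starRingEnd ℂ) (cohVec θ φ k) * ρ (i, k) (j, l) * cohVec θ φ l)
          * ((Real.sin θ : ℝ) : ℂ)
    = ∑ k, ρ (i, k) (j, k) := by
  set b : ℝ := ∫ x in (0:ℝ)..Real.pi, Real.cos (x/2) * Real.sin (x/2) * Real.sin x with hb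
  have hInner : ∀ φ : ℝ,
      (∫ θ in (0:ℝ)..Real.pi,
        (∑ k, ∑ l, (starRingEnd ℂ) (cohVec θ φ k) * ρ (i, k) (j, l) * cohVec θ φ l)
          * ((Real.sin θ : ℝ) : ℂ))
      = (ρ (i,0) (j,0) + ρ (i,1) (j,1))
        + (ρ (i,0) (j,1) * (b:ℂ)) * Complex.exp (Complex.I * φ)
        + (ρ (i,1) (j,0) * (b:ℂ)) * Complex.exp (-(Complex.I * φ)) := by
    intro φ
    have hconj : (starRingEnd ℂ) (Complex.exp (Complex.I * φ)) = (Complex.exp (Complex.I * φ))⁻¹ := by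
      rw [← Complex.exp_conj, ← Complex.exp_neg]
      congr 1
      simp [Complex.conj_I]
    have heq : ∀ θ : ℝ,
        (∑ k, ∑ l, (starRingEnd ℂ) (cohVec θ φ k) * ρ (i, k) (j, l) * cohVec θ φ l)
          * ((Real.sin θ : ℝ) : ℂ)
        = ρ (i,0) (j,0) * ((Real.cos (θ/2)^2 * Real.sin θ : ℝ) : ℂ)
          + ρ (i,1) (j,1) * ((Real.sin (θ/2)^2 * Real.sin θ : ℝ) : ℂ)
          + (ρ (i,0) (j,1) * Complex.exp (Complex.I * φ))
              * ((Real.cos (θ/2) * Real.sin (θ/2) * Real.sin θ : ℝ) : ℂ)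
          + (ρ (i,1) (j,0) * Complex.exp (-(Complex.I * φ)))
              * ((Real.cos (θ/2) * Real.sin (θ/2) * Real.sin θ : ℝ) : ℂ) := by
      intro θ
      simp only [cohVec, Fin.sum_univ_two, Matrix.cons_val_zero, Matrix.cons_val_one,
        Matrix.head_cons, _root_.map_mul, Complex.conj_ofReal, hconj, Complex.exp_neg]
      push_cast
      field_simp
      ring
    rw [intervalIntegral.integral_congr (fun θ _ => heq θ)]
    have c1 : IntervalIntegrable (fun θ : ℝ => ((Real.cos (θ/2)^2 * Real.sin θ : ℝ) : ℂ)) volume 0 Real.pi := by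
      apply Continuous.intervalIntegrable; fun_prop
    have c2 : IntervalIntegrable (fun θ : ℝ => ((Real.sin (θ/2)^2 * Real.sin θ : ℝ) : ℂ)) volume 0 Real.pi := by
      apply Continuous.intervalIntegrable; fun_prop
    have c3 : IntervalIntegrable (fun θ : ℝ => ((Real.cos (θ/2) * Real.sin (θ/2) * Real.sin θ : ℝ) : ℂ)) volume 0 Real.pi := by
      apply Continuous.intervalIntegrable; fun_prop
    rw [intervalIntegral.integral_add (((c1.const_mul _).add (c2.const_mul _)).add (c3.const_mul _)) (c3.const_mul _),
      intervalIntegral.integral_add ((c1.const_mul _).add (c2.const_mul _)) (c3.const_mul _),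
      intervalIntegral.integral_add (c1.const_mul _) (c2.const_mul _),
      intervalIntegral.integral_const_mul, intervalIntegral.integral_const_mul,
      intervalIntegral.integral_const_mul, intervalIntegral.integral_const_mul,
      intervalIntegral.integral_ofReal, intervalIntegral.integral_ofReal,
      intervalIntegral.integral_ofReal, key1, key2, ← hb]
    push_cast
    ring
  rw [intervalIntegral.integral_congr (fun φ _ => hInner φ)]
  have e1 : IntervalIntegrable (fun φ : ℝ => Complex.exp (Complex.I * φ)) volume 0 (2*Real.pi) := by
    apply Continuous.intervalIntegrable; fun_prop
  have e2 : IntervalIntegrable (fun φ : ℝ => Complex.exp (-(Complex.I * φ))) volume 0 (2*Real.pi) := by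
    apply Continuous.intervalIntegrable; fun_prop
  rw [intervalIntegral.integral_add
      (((intervalIntegrable_const).add (e1.const_mul _)) ) (e2.const_mul _),
    intervalIntegral.integral_add (intervalIntegrable_const) (e1.const_mul _),
    intervalIntegral.integral_const_mul, intervalIntegral.integral_const_mul,
    intervalIntegral.integral_const]
  have hI1 : (∫ φ : ℝ in (0:ℝ)..(2*Real.pi), Complex.exp (Complex.I * φ)) = 0 := by
    rw [integral_exp_mul_complex Complex.I_ne_zero]
    rw [show Complex.I * ((2*Real.pi : ℝ) : ℂ) = 2 * Real.pi * Complex.I by push_cast; ring]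
    simp [Complex.exp_two_pi_mul_I]
  have hI2 : (∫ φ : ℝ in (0:ℝ)..(2*Real.pi), Complex.exp (-(Complex.I * φ))) = 0 := by
    have : ∀ φ : ℝ, Complex.exp (-(Complex.I * φ)) = Complex.exp ((-Complex.I) * φ) := by
      intro φ; ring_nf
    simp only [this]
    rw [integral_exp_mul_complex (neg_ne_zero.mpr Complex.I_ne_zero)]
    rw [show (-Complex.I) * ((2*Real.pi : ℝ) : ℂ) = -(2 * Real.pi * Complex.I) by push_cast; ring]
    simp [Complex.exp_neg, Complex.exp_two_pi_mul_I]
  rw [hI1, hI2, Fin.sum_univ_two]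
  have hπ : (Real.pi : ℂ) ≠ 0 := by exact_mod_cast Real.pi_ne_zero
  simp only [sub_zero, mul_zero, add_zero]
  rw [Complex.real_smul]
  push_cast
  field_simp
end
end

section
/- For every 2×2 complex Hermitian matrix ρ with Tr(ρ) = 1, the purity satisfies Tr(ρ²) = 6π · ∫₀^{2π}∫₀^π Q_ρ(θ,φ)² sinθ dθ dφ − 1. -/
open Matrix Complex Real MeasureTheory

noncomputable section

/-- The Husimi Q function of a 2×2 complex matrix. -/
def Qfun (A : Matrix (Fin 2) (Fin 2) ℂ) (θ φ : ℝ) : ℂ :=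
  (1 / (2 * Real.pi) : ℂ) *
    ∑ k, ∑ l, (starRingEnd ℂ) (cohVec θ φ k) * A k l * cohVec θ φ l

/-! In Bloch form, `4π · Q_A(θ, φ) = tr A + (A₀₀ - A₁₁) cos θ + w(φ) sin θ` with
`w(φ) = A₀₁ e^{iφ} + A₁₀ e^{-iφ}`. Against `sin θ dθ` on `[0, π]` the cross terms with `cos θ`
integrate to zero, and over a full period in `φ` the term linear in `w` vanishes while `w²`
contributes only its constant Fourier mode `2 A₀₁ A₁₀`. This gives
`∫ Q_A² dΩ = (tr A² + (tr A)²) / (6π)` for every `2 × 2` matrix `A`, and `tr ρ = 1` finishes. -/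

lemma Qfun_eq_bloch (A : Matrix (Fin 2) (Fin 2) ℂ) (θ φ : ℝ) :
    Qfun A θ φ = (4 * π : ℂ)⁻¹ * (A.trace + (A 0 0 - A 1 1) * Complex.cos θ
      + (A 0 1 * cexp (I * φ) + A 1 0 * cexp (-(I * φ))) * Complex.sin θ) := by
  have hconj : (starRingEnd ℂ) (cexp (I * φ)) = cexp (-(I * φ)) := by
    rw [← Complex.exp_conj]; simp
  have hunit : cexp (I * φ) * cexp (-(I * φ)) = 1 := by
    rw [← Complex.exp_add]; simp
  have hθ : (θ : ℂ) = 2 * ((θ / 2 : ℝ) : ℂ) := by push_cast; ring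
  have hpyth := Complex.ofReal_inj.mpr (Real.sin_sq_add_cos_sq (θ / 2))
  have hπ : (π : ℂ) ≠ 0 := Complex.ofReal_ne_zero.mpr Real.pi_ne_zero
  simp only [Qfun, cohVec, Fin.sum_univ_two, Matrix.cons_val_zero, Matrix.cons_val_one,
    map_mul, Complex.conj_ofReal, hconj, Matrix.trace_fin_two, hθ, Complex.cos_two_mul',
    Complex.sin_two_mul]
  push_cast at hpyth ⊢
  field_simp
  linear_combination 2 * (A 0 0 + A 1 1) * hpyth + 4 * Complex.sin (θ / 2) ^ 2 * A 1 1 * hunit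

lemma integral_sq_mul_sin (t z w : ℂ) :
    ∫ θ in (0 : ℝ)..π, (t + z * Complex.cos θ + w * Complex.sin θ) ^ 2 * Complex.sin θ
      = 2 * t ^ 2 + 2 / 3 * z ^ 2 + π * t * w + 4 / 3 * w ^ 2 := by
  let F : ℝ → ℂ := fun θ => -t ^ 2 * Complex.cos θ - z ^ 2 / 3 * Complex.cos θ ^ 3
    + w ^ 2 * (Complex.cos θ ^ 3 / 3 - Complex.cos θ) + t * z * Complex.sin θ ^ 2
    + t * w * (θ - Complex.sin θ * Complex.cos θ) + 2 / 3 * z * w * Complex.sin θ ^ 3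
  have hF : ∀ θ : ℝ, HasDerivAt F
      ((t + z * Complex.cos θ + w * Complex.sin θ) ^ 2 * Complex.sin θ) θ := by
    intro θ
    have hc := (Complex.hasDerivAt_cos θ).comp_ofReal
    have hs := (Complex.hasDerivAt_sin θ).comp_ofReal
    have hid : HasDerivAt (fun y : ℝ => (y : ℂ)) 1 θ := (hasDerivAt_id θ).ofReal_comp
    have := (((((hc.const_mul (-t ^ 2)).sub ((hc.pow 3).const_mul (z ^ 2 / 3))).add
      ((((hc.pow 3).div_const 3).sub hc).const_mul (w ^ 2))).add
      ((hs.pow 2).const_mul (t * z))).add ((hid.sub (hs.mul hc)).const_mul (t * w))).add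
      ((hs.pow 3).const_mul (2 / 3 * z * w))
    refine this.congr_deriv ?_
    norm_num
    linear_combination -(w ^ 2 * Complex.sin θ + t * w) * Complex.sin_sq_add_cos_sq (θ : ℂ)
  rw [intervalIntegral.integral_eq_sub_of_hasDerivAt (fun θ _ => hF θ)
    (Continuous.intervalIntegrable (by fun_prop) _ _)]
  simp only [F, Complex.ofReal_zero, Complex.cos_zero, Complex.sin_zero, Complex.cos_pi,
    Complex.sin_pi]
  ring

lemma integral_quadratic_exp_add_exp (p q r b c : ℂ) :
    ∫ φ in (0 : ℝ)..2 * π, (p + q * (b * cexp (I * φ) + c * cexp (-(I * φ)))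
      + r * (b * cexp (I * φ) + c * cexp (-(I * φ))) ^ 2) = 2 * π * (p + 2 * r * b * c) := by
  let G : ℝ → ℂ := fun φ => (p + 2 * r * b * c) * φ
    + q / I * (b * cexp (I * φ) - c * cexp (-(I * φ)))
    + r / (2 * I) * (b ^ 2 * cexp (I * φ) ^ 2 - c ^ 2 * cexp (-(I * φ)) ^ 2)
  have hG : ∀ φ : ℝ, HasDerivAt G (p + q * (b * cexp (I * φ) + c * cexp (-(I * φ)))
      + r * (b * cexp (I * φ) + c * cexp (-(I * φ))) ^ 2) φ := by
    intro φ
    have hid : HasDerivAt (fun y : ℝ => (y : ℂ)) 1 φ := (hasDerivAt_id φ).ofReal_comp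
    have he := (hid.const_mul I).cexp
    have he' := (hid.const_mul I).neg.cexp
    have := ((hid.const_mul (p + 2 * r * b * c)).add
      (((he.const_mul b).sub (he'.const_mul c)).const_mul (q / I))).add
      ((((he.pow 2).const_mul (b ^ 2)).sub ((he'.pow 2).const_mul (c ^ 2))).const_mul (r / (2 * I)))
    refine this.congr_deriv ?_
    have hunit : cexp (I * φ) * cexp (-(I * φ)) = 1 := by
      rw [← Complex.exp_add]; simp
    field_simp
    norm_num
    linear_combination (-4 * r * b * c) * hunit
  have hperiod : cexp (I * (2 * π : ℝ)) = 1 := by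
    simpa [mul_comm] using Complex.exp_two_pi_mul_I
  rw [intervalIntegral.integral_eq_sub_of_hasDerivAt (fun φ _ => hG φ)
    (Continuous.intervalIntegrable (by fun_prop) _ _)]
  simp only [G, hperiod, Complex.exp_neg, Complex.ofReal_zero, mul_zero, Complex.exp_zero]
  push_cast
  ring

lemma integral_Qfun_sq (A : Matrix (Fin 2) (Fin 2) ℂ) :
    ∫ φ in (0 : ℝ)..2 * π, ∫ θ in (0 : ℝ)..π, Qfun A θ φ ^ 2 * ((Real.sin θ : ℝ) : ℂ)
      = ((A * A).trace + A.trace ^ 2) / (6 * π) := by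
  set W : ℝ → ℂ := fun φ => A 0 1 * cexp (I * φ) + A 1 0 * cexp (-(I * φ))
  have hinner (φ : ℝ) : ∫ θ in (0 : ℝ)..π, Qfun A θ φ ^ 2 * ((Real.sin θ : ℝ) : ℂ)
      = (4 * π : ℂ)⁻¹ ^ 2 * (2 * A.trace ^ 2 + 2 / 3 * (A 0 0 - A 1 1) ^ 2
        + π * A.trace * W φ + 4 / 3 * W φ ^ 2) := by
    rw [← integral_sq_mul_sin, ← intervalIntegral.integral_const_mul]
    congr 1 with θ
    rw [Qfun_eq_bloch, Complex.ofReal_sin]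
    ring
  have hπ : (π : ℂ) ≠ 0 := Complex.ofReal_ne_zero.mpr Real.pi_ne_zero
  simp only [hinner, intervalIntegral.integral_const_mul, W, integral_quadratic_exp_add_exp,
    Matrix.trace_fin_two, Matrix.mul_apply, Fin.sum_univ_two]
  field_simp
  ring

theorem purity_in_phase_space_general (ρ : Matrix (Fin 2) (Fin 2) ℂ)
    (htr : ρ.trace = 1) :
    Matrix.trace (ρ * ρ) =
      (6 * Real.pi : ℂ) *
        (∫ φ in (0:ℝ)..(2 * Real.pi), ∫ θ in (0:ℝ)..Real.pi,
          (Qfun ρ θ φ) ^ 2 * ((Real.sin θ : ℝ) : ℂ)) - 1 := by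
  have hπ : (π : ℂ) ≠ 0 := Complex.ofReal_ne_zero.mpr Real.pi_ne_zero
  rw [integral_Qfun_sq, htr]
  field_simp
  ring

/-- purity in phase-space,
Tr(ρ²) = 6π ∫ Q_ρ(θ,φ)² sinθ dθ dφ − 1. -/
theorem purity_in_phase_space (ρ : Matrix (Fin 2) (Fin 2) ℂ)
    (hherm : ρ.IsHermitian) (htr : ρ.trace = 1) :
    Matrix.trace (ρ * ρ) =
      (6 * Real.pi : ℂ) *
        (∫ φ in (0:ℝ)..(2 * Real.pi), ∫ θ in (0:ℝ)..Real.pi,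
          (Qfun ρ θ φ) ^ 2 * ((Real.sin θ : ℝ) : ℂ)) - 1 :=
  purity_in_phase_space_general ρ htr
end
end

section
/- For every 2×2 complex matrix ρ and all θ ∈ (0,π), φ ∈ ℝ, the cosine bracket (anticommutator) with each Pauli generator is realized by the differential operators 𝒦: Q_{σxρ+ρσx}(θ,φ) = 2( sinθcosφ · Q_ρ + cosθcosφ · ∂Q_ρ/∂θ − (sinφ/sinθ) · ∂Q_ρ/∂φ ), Q_{σyρ+ρσy}(θ,φ) = 2( sinθsinφ · Q_ρ + cosθsinφ · ∂Q_ρ/∂θ + (cosφ/sinθ) · ∂Q_ρ/∂φ ), and Q_{σzρ+ρσz}(θ,φ) = 2( cosθ · Q_ρ − sinθ · ∂Q_ρ/∂θ ). -/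
open Matrix Complex Real MeasureTheory

noncomputable section

/-- ∂Q_A/∂θ. -/
def Qθ (A : Matrix (Fin 2) (Fin 2) ℂ) (θ φ : ℝ) : ℂ :=
  deriv (fun t => Qfun A t φ) θ

/-- ∂Q_A/∂φ. -/
def Qφ (A : Matrix (Fin 2) (Fin 2) ℂ) (θ φ : ℝ) : ℂ :=
  deriv (fun p => Qfun A θ p) φ

lemma Qfun_eq (A : Matrix (Fin 2) (Fin 2) ℂ) (t p : ℝ) :
    Qfun A t p = (1 / (2 * (Real.pi : ℂ))) *
      ( A 0 0 * (1 + (Real.cos t : ℂ)) / 2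
      + A 0 1 * Complex.exp (Complex.I * p) * (Real.sin t : ℂ) / 2
      + A 1 0 * Complex.exp (-(Complex.I * p)) * (Real.sin t : ℂ) / 2
      + A 1 1 * (1 - (Real.cos t : ℂ)) / 2 ) := by
  have h1 : Real.cos (t/2) * Real.cos (t/2) = (1 + Real.cos t)/2 := by
    have := Real.cos_sq (t/2)
    rw [show 2*(t/2) = t by ring] at this
    nlinarith [this]
  have h2 : Real.sin (t/2) * Real.sin (t/2) = (1 - Real.cos t)/2 := by
    nlinarith [Real.sin_sq_add_cos_sq (t/2), h1]
  have h3 : Real.sin (t/2) * Real.cos (t/2) = Real.sin t / 2 := by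
    have := Real.sin_two_mul (t/2)
    rw [show 2*(t/2) = t by ring] at this
    linarith
  have hee : Complex.exp (-(Complex.I * p)) * Complex.exp (Complex.I * p) = 1 := by
    rw [← Complex.exp_add]; simp
  simp only [Qfun, cohVec, Fin.sum_univ_two, Matrix.cons_val_zero, Matrix.cons_val_one,
    Matrix.head_cons, _root_.map_mul, ← Complex.exp_conj,
    Complex.conj_I, Complex.conj_ofReal, neg_mul]
  have h1c : ((Real.cos (t/2):ℝ):ℂ) * ((Real.cos (t/2):ℝ):ℂ) = (1 + ((Real.cos t:ℝ):ℂ))/2 := by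
    exact_mod_cast congrArg (fun x:ℝ => (x:ℂ)) h1
  have h2c : ((Real.sin (t/2):ℝ):ℂ) * ((Real.sin (t/2):ℝ):ℂ) = (1 - ((Real.cos t:ℝ):ℂ))/2 := by
    exact_mod_cast congrArg (fun x:ℝ => (x:ℂ)) h2
  have h3c : ((Real.sin (t/2):ℝ):ℂ) * ((Real.cos (t/2):ℝ):ℂ) = ((Real.sin t:ℝ):ℂ)/2 := by
    exact_mod_cast congrArg (fun x:ℝ => (x:ℂ)) h3
  set k : ℂ := 1 / (2 * (Real.pi : ℂ))
  set E : ℂ := Complex.exp (Complex.I * (p:ℂ))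
  set F : ℂ := Complex.exp (-(Complex.I * (p:ℂ)))
  linear_combination k * A 0 0 * h1c + k * A 0 1 * E * h3c + k * A 1 0 * F * h3c
    + k * A 1 1 * E * F * h2c + k * A 1 1 * ((1 - ((Real.cos t:ℝ):ℂ))/2) * hee

lemma Qθ_eq (A : Matrix (Fin 2) (Fin 2) ℂ) (θ φ : ℝ) :
    Qθ A θ φ = (1 / (2 * (Real.pi : ℂ))) *
      ( A 0 0 * (-(Real.sin θ : ℂ)) / 2
      + A 0 1 * Complex.exp (Complex.I * φ) * (Real.cos θ : ℂ) / 2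
      + A 1 0 * Complex.exp (-(Complex.I * φ)) * (Real.cos θ : ℂ) / 2
      + A 1 1 * ((Real.sin θ : ℂ)) / 2 ) := by
  have hfun : (fun t => Qfun A t φ) = fun t => (1 / (2 * (Real.pi : ℂ))) *
      ( A 0 0 * (1 + (Real.cos t : ℂ)) / 2
      + A 0 1 * Complex.exp (Complex.I * φ) * (Real.sin t : ℂ) / 2
      + A 1 0 * Complex.exp (-(Complex.I * φ)) * (Real.sin t : ℂ) / 2
      + A 1 1 * (1 - (Real.cos t : ℂ)) / 2 ) := funext fun t => Qfun_eq A t φ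
  rw [show Qθ A θ φ = deriv (fun t => Qfun A t φ) θ from rfl, hfun]
  have hc : HasDerivAt (fun t : ℝ => ((Real.cos t : ℝ) : ℂ)) ((-Real.sin θ : ℝ) : ℂ) θ :=
    (Real.hasDerivAt_cos θ).ofReal_comp
  have hs : HasDerivAt (fun t : ℝ => ((Real.sin t : ℝ) : ℂ)) ((Real.cos θ : ℝ) : ℂ) θ :=
    (Real.hasDerivAt_sin θ).ofReal_comp
  have H : HasDerivAt (fun t : ℝ => (1 / (2 * (Real.pi : ℂ))) *
      ( A 0 0 * (1 + (Real.cos t : ℂ)) / 2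
      + A 0 1 * Complex.exp (Complex.I * φ) * (Real.sin t : ℂ) / 2
      + A 1 0 * Complex.exp (-(Complex.I * φ)) * (Real.sin t : ℂ) / 2
      + A 1 1 * (1 - (Real.cos t : ℂ)) / 2 ))
      ((1 / (2 * (Real.pi : ℂ))) *
      ( A 0 0 * (-(Real.sin θ : ℂ)) / 2
      + A 0 1 * Complex.exp (Complex.I * φ) * (Real.cos θ : ℂ) / 2
      + A 1 0 * Complex.exp (-(Complex.I * φ)) * (Real.cos θ : ℂ) / 2
      + A 1 1 * ((Real.sin θ : ℂ)) / 2 )) θ := by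
    have h0 : HasDerivAt (fun t : ℝ =>
        A 0 0 * (1 + (Real.cos t : ℂ)) / 2
      + A 0 1 * Complex.exp (Complex.I * φ) * (Real.sin t : ℂ) / 2
      + A 1 0 * Complex.exp (-(Complex.I * φ)) * (Real.sin t : ℂ) / 2
      + A 1 1 * (1 - (Real.cos t : ℂ)) / 2)
      ( A 0 0 * (-(Real.sin θ : ℂ)) / 2
      + A 0 1 * Complex.exp (Complex.I * φ) * (Real.cos θ : ℂ) / 2
      + A 1 0 * Complex.exp (-(Complex.I * φ)) * (Real.cos θ : ℂ) / 2
      + A 1 1 * ((Real.sin θ : ℂ)) / 2) θ := by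
      have t1 : HasDerivAt (fun t : ℝ => A 0 0 * (1 + (Real.cos t : ℂ)) / 2)
          (A 0 0 * (-(Real.sin θ : ℂ)) / 2) θ := by
        simpa using (((hasDerivAt_const θ (1:ℂ)).add hc).const_mul (A 0 0)).div_const 2
      have t2 : HasDerivAt (fun t : ℝ => A 0 1 * Complex.exp (Complex.I * φ) * (Real.sin t : ℂ) / 2)
          (A 0 1 * Complex.exp (Complex.I * φ) * (Real.cos θ : ℂ) / 2) θ := by
        simpa using ((hs.const_mul (A 0 1 * Complex.exp (Complex.I * φ))).div_const 2)
      have t3 : HasDerivAt (fun t : ℝ => A 1 0 * Complex.exp (-(Complex.I * φ)) * (Real.sin t : ℂ) / 2)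
          (A 1 0 * Complex.exp (-(Complex.I * φ)) * (Real.cos θ : ℂ) / 2) θ := by
        simpa using ((hs.const_mul (A 1 0 * Complex.exp (-(Complex.I * φ)))).div_const 2)
      have t4 : HasDerivAt (fun t : ℝ => A 1 1 * (1 - (Real.cos t : ℂ)) / 2)
          (A 1 1 * ((Real.sin θ : ℂ)) / 2) θ := by
        have := (((hasDerivAt_const θ (1:ℂ)).sub hc).const_mul (A 1 1)).div_const 2
        simpa using this
      exact ((t1.add t2).add t3).add t4
    exact h0.const_mul _
  exact H.deriv

lemma Qφ_eq (A : Matrix (Fin 2) (Fin 2) ℂ) (θ φ : ℝ) :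
    Qφ A θ φ = (1 / (2 * (Real.pi : ℂ))) *
      ( A 0 1 * (Complex.I * Complex.exp (Complex.I * φ)) * (Real.sin θ : ℂ) / 2
      + A 1 0 * (-(Complex.I * Complex.exp (-(Complex.I * φ)))) * (Real.sin θ : ℂ) / 2 ) := by
  have hfun : (fun p => Qfun A θ p) = fun p : ℝ => (1 / (2 * (Real.pi : ℂ))) *
      ( A 0 0 * (1 + (Real.cos θ : ℂ)) / 2
      + A 0 1 * Complex.exp (Complex.I * p) * (Real.sin θ : ℂ) / 2
      + A 1 0 * Complex.exp (-(Complex.I * p)) * (Real.sin θ : ℂ) / 2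
      + A 1 1 * (1 - (Real.cos θ : ℂ)) / 2 ) := funext fun p => Qfun_eq A θ p
  rw [show Qφ A θ φ = deriv (fun p => Qfun A θ p) φ from rfl, hfun]
  have hid : HasDerivAt (fun p : ℝ => ((p : ℝ) : ℂ)) 1 φ := by
    simpa using (hasDerivAt_id φ).ofReal_comp
  have hE : HasDerivAt (fun p : ℝ => Complex.exp (Complex.I * p))
      (Complex.I * Complex.exp (Complex.I * φ)) φ := by
    have := ((hid.const_mul Complex.I)).cexp
    simpa [mul_comm] using this
  have hF : HasDerivAt (fun p : ℝ => Complex.exp (-(Complex.I * p)))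
      (-(Complex.I * Complex.exp (-(Complex.I * φ)))) φ := by
    have := ((hid.const_mul Complex.I).neg).cexp
    simpa [mul_comm] using this
  have H : HasDerivAt (fun p : ℝ => (1 / (2 * (Real.pi : ℂ))) *
      ( A 0 0 * (1 + (Real.cos θ : ℂ)) / 2
      + A 0 1 * Complex.exp (Complex.I * p) * (Real.sin θ : ℂ) / 2
      + A 1 0 * Complex.exp (-(Complex.I * p)) * (Real.sin θ : ℂ) / 2
      + A 1 1 * (1 - (Real.cos θ : ℂ)) / 2 ))
      ((1 / (2 * (Real.pi : ℂ))) *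
      ( A 0 1 * (Complex.I * Complex.exp (Complex.I * φ)) * (Real.sin θ : ℂ) / 2
      + A 1 0 * (-(Complex.I * Complex.exp (-(Complex.I * φ)))) * (Real.sin θ : ℂ) / 2 )) φ := by
    have t1 : HasDerivAt (fun _ : ℝ => A 0 0 * (1 + (Real.cos θ : ℂ)) / 2) 0 φ := hasDerivAt_const _ _
    have t2 : HasDerivAt (fun p : ℝ => A 0 1 * Complex.exp (Complex.I * p) * (Real.sin θ : ℂ) / 2)
        (A 0 1 * (Complex.I * Complex.exp (Complex.I * φ)) * (Real.sin θ : ℂ) / 2) φ := by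
      have := (((hE.const_mul (A 0 1)).mul_const ((Real.sin θ : ℂ))).div_const 2)
      simpa [mul_assoc, mul_comm, mul_left_comm] using this
    have t3 : HasDerivAt (fun p : ℝ => A 1 0 * Complex.exp (-(Complex.I * p)) * (Real.sin θ : ℂ) / 2)
        (A 1 0 * (-(Complex.I * Complex.exp (-(Complex.I * φ)))) * (Real.sin θ : ℂ) / 2) φ := by
      have := (((hF.const_mul (A 1 0)).mul_const ((Real.sin θ : ℂ))).div_const 2)
      simpa [mul_assoc, mul_comm, mul_left_comm] using this
    have t4 : HasDerivAt (fun _ : ℝ => A 1 1 * (1 - (Real.cos θ : ℂ)) / 2) 0 φ := hasDerivAt_const _ _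
    have h0 := ((t1.add t2).add t3).add t4
    simpa using h0.const_mul (1 / (2 * (Real.pi : ℂ)))
  exact H.deriv


/-- the cosine bracket (anticommutator) with each Pauli generator is
realized by the differential operators 𝒦 on the Q function. -/
theorem cosine_bracket_in_coordinates (ρ : Matrix (Fin 2) (Fin 2) ℂ)
    (θ φ : ℝ) (hθ : θ ∈ Set.Ioo (0 : ℝ) Real.pi) :
    Qfun (σx * ρ + ρ * σx) θ φ =
      2 * (((Real.sin θ * Real.cos φ : ℝ) : ℂ) * Qfun ρ θ φ
        + ((Real.cos θ * Real.cos φ : ℝ) : ℂ) * Qθ ρ θ φ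
        - ((Real.sin φ / Real.sin θ : ℝ) : ℂ) * Qφ ρ θ φ) ∧
    Qfun (σy * ρ + ρ * σy) θ φ =
      2 * (((Real.sin θ * Real.sin φ : ℝ) : ℂ) * Qfun ρ θ φ
        + ((Real.cos θ * Real.sin φ : ℝ) : ℂ) * Qθ ρ θ φ
        + ((Real.cos φ / Real.sin θ : ℝ) : ℂ) * Qφ ρ θ φ) ∧
    Qfun (σz * ρ + ρ * σz) θ φ =
      2 * (((Real.cos θ : ℝ) : ℂ) * Qfun ρ θ φ
        - ((Real.sin θ : ℝ) : ℂ) * Qθ ρ θ φ) := by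
  obtain ⟨hθ0, hθπ⟩ := hθ
  have hSne : ((Real.sin θ : ℝ) : ℂ) ≠ 0 :=
    Complex.ofReal_ne_zero.mpr (ne_of_gt (Real.sin_pos_of_pos_of_lt_pi hθ0 hθπ))
  have hP : ((Real.cos θ:ℝ):ℂ)^2 + ((Real.sin θ:ℝ):ℂ)^2 = 1 := by
    exact_mod_cast congrArg (fun x:ℝ => (x:ℂ)) (Real.cos_sq_add_sin_sq θ)
  have hR : Complex.exp (Complex.I * φ) * Complex.exp (-(Complex.I * φ)) = 1 := by
    rw [← Complex.exp_add]; simp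
  have hT : ((Real.sin θ:ℝ):ℂ)⁻¹ * ((Real.sin θ:ℝ):ℂ) = 1 := inv_mul_cancel₀ hSne
  have hJ : Complex.I ^ 2 = -1 := Complex.I_sq
  have hcosφ : ((Real.cos φ : ℝ) : ℂ)
      = (Complex.exp (Complex.I * φ) + Complex.exp (-(Complex.I * φ)))/2 := by
    rw [Complex.ofReal_cos, Complex.cos, neg_mul, mul_comm (φ:ℂ) Complex.I]
  have hsinφ : ((Real.sin φ : ℝ) : ℂ)
      = (Complex.exp (-(Complex.I * φ)) - Complex.exp (Complex.I * φ)) * Complex.I / 2 := by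
    rw [Complex.ofReal_sin, Complex.sin, neg_mul, mul_comm (φ:ℂ) Complex.I]
  have ex00 : (σx * ρ + ρ * σx) 0 0 = ρ 1 0 + ρ 0 1 := by
    simp [σx, Matrix.mul_apply, Matrix.vecMul, dotProduct, Fin.sum_univ_two]
  have ex01 : (σx * ρ + ρ * σx) 0 1 = ρ 1 1 + ρ 0 0 := by
    simp [σx, Matrix.mul_apply, Matrix.vecMul, dotProduct, Fin.sum_univ_two]
  have ex10 : (σx * ρ + ρ * σx) 1 0 = ρ 0 0 + ρ 1 1 := by
    simp [σx, Matrix.mul_apply, Matrix.vecMul, dotProduct, Fin.sum_univ_two]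
  have ex11 : (σx * ρ + ρ * σx) 1 1 = ρ 0 1 + ρ 1 0 := by
    simp [σx, Matrix.mul_apply, Matrix.vecMul, dotProduct, Fin.sum_univ_two]
  have ey00 : (σy * ρ + ρ * σy) 0 0 = Complex.I * (ρ 0 1 - ρ 1 0) := by
    simp [σy, Matrix.mul_apply, Matrix.vecMul, dotProduct, Fin.sum_univ_two]; ring
  have ey01 : (σy * ρ + ρ * σy) 0 1 = -(Complex.I * (ρ 0 0 + ρ 1 1)) := by
    simp [σy, Matrix.mul_apply, Matrix.vecMul, dotProduct, Fin.sum_univ_two]; ring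
  have ey10 : (σy * ρ + ρ * σy) 1 0 = Complex.I * (ρ 0 0 + ρ 1 1) := by
    simp [σy, Matrix.mul_apply, Matrix.vecMul, dotProduct, Fin.sum_univ_two]; ring
  have ey11 : (σy * ρ + ρ * σy) 1 1 = Complex.I * (ρ 0 1 - ρ 1 0) := by
    simp [σy, Matrix.mul_apply, Matrix.vecMul, dotProduct, Fin.sum_univ_two]; ring
  have ez00 : (σz * ρ + ρ * σz) 0 0 = 2 * ρ 0 0 := by
    simp [σz, Matrix.mul_apply, Matrix.vecMul, dotProduct, Fin.sum_univ_two]; ring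
  have ez01 : (σz * ρ + ρ * σz) 0 1 = 0 := by
    simp [σz, Matrix.mul_apply, Matrix.vecMul, dotProduct, Fin.sum_univ_two]
  have ez10 : (σz * ρ + ρ * σz) 1 0 = 0 := by
    simp [σz, Matrix.mul_apply, Matrix.vecMul, dotProduct, Fin.sum_univ_two]
  have ez11 : (σz * ρ + ρ * σz) 1 1 = -(2 * ρ 1 1) := by
    simp [σz, Matrix.mul_apply, Matrix.vecMul, dotProduct, Fin.sum_univ_two]; ring
  set C : ℂ := ((Real.cos θ : ℝ) : ℂ) with hCdef
  set S : ℂ := ((Real.sin θ : ℝ) : ℂ) with hSdef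
  set E : ℂ := Complex.exp (Complex.I * φ) with hEdef
  set F : ℂ := Complex.exp (-(Complex.I * φ)) with hFdef
  refine ⟨?_, ?_, ?_⟩
  · rw [Qfun_eq, Qfun_eq, Qθ_eq, Qφ_eq, ex00, ex01, ex10, ex11]
    simp only [Complex.ofReal_mul, Complex.ofReal_div, ← hCdef, ← hSdef, ← hEdef, ← hFdef,
      hcosφ, hsinφ]
    linear_combination (-(1/(2*(Real.pi:ℂ)))) * (((1/2) * S * S⁻¹ * F^2 * ρ 1 0 + (-1/2) * S * S⁻¹ * E * F * ρ 1 0 + (-1/2) * S * S⁻¹ * E * F * ρ 0 1 + (1/2) * S * S⁻¹ * E^2 * ρ 0 1) * hJ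
      + ((1/2) * S * S⁻¹ * ρ 1 0 + (1/2) * S * S⁻¹ * ρ 0 1 + (1/2) * S^2 * ρ 1 0 + (1/2) * S^2 * ρ 0 1 + (1/2) * C^2 * ρ 1 0 + (1/2) * C^2 * ρ 0 1) * hR
      + ((1/2) * ρ 1 0 + (1/2) * ρ 0 1 + (-1/2) * F^2 * ρ 1 0 + (-1/2) * E^2 * ρ 0 1) * hT
      + ((1/2) * ρ 1 0 + (1/2) * ρ 0 1 + (1/2) * F^2 * ρ 1 0 + (1/2) * E^2 * ρ 0 1) * hP)
  · rw [Qfun_eq, Qfun_eq, Qθ_eq, Qφ_eq, ey00, ey01, ey10, ey11]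
    simp only [Complex.ofReal_mul, Complex.ofReal_div, ← hCdef, ← hSdef, ← hEdef, ← hFdef,
      hcosφ, hsinφ]
    linear_combination (-(1/(2*(Real.pi:ℂ)))) * (((-1/2) * S * S⁻¹ * Complex.I * ρ 1 0 + (1/2) * S * S⁻¹ * Complex.I * ρ 0 1 + (-1/2) * S^2 * Complex.I * ρ 1 0 + (1/2) * S^2 * Complex.I * ρ 0 1 + (-1/2) * C^2 * Complex.I * ρ 1 0 + (1/2) * C^2 * Complex.I * ρ 0 1) * hR
      + ((-1/2) * Complex.I * ρ 1 0 + (1/2) * Complex.I * ρ 0 1 + (-1/2) * F^2 * Complex.I * ρ 1 0 + (1/2) * E^2 * Complex.I * ρ 0 1) * hT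
      + ((-1/2) * Complex.I * ρ 1 0 + (1/2) * Complex.I * ρ 0 1 + (1/2) * F^2 * Complex.I * ρ 1 0 + (-1/2) * E^2 * Complex.I * ρ 0 1) * hP)
  · rw [Qfun_eq, Qfun_eq, Qθ_eq, ez00, ez01, ez10, ez11]
    simp only [← hCdef, ← hSdef, ← hEdef, ← hFdef]
    linear_combination (-(1/(2*(Real.pi:ℂ)))) * (((-1) * ρ 1 1 + (1) * ρ 0 0) * hP)
end
end

section
/- For all 2×2 complex matrices A and B and all θ ∈ (0,π), φ ∈ ℝ, the sine bracket equals a scaled Poisson bracket on the sphere: Q_{−i(AB−BA)}(θ,φ) = (4π/sinθ)·( ∂Q_A/∂θ · ∂Q_B/∂φ − ∂Q_A/∂φ · ∂Q_B/∂θ ). -/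
open Matrix Complex Real MeasureTheory

noncomputable section

/-! In the coordinates `c = cos (θ/2)`, `s = sin (θ/2)`, `e = e^{iφ}`, `f = e^{-iφ}`, the function
`2π Q_A` is the quadratic form `husimiPoly A c s e f`, and its partial derivatives are again
polynomials in `c, s, e, f`. As `sin θ = 2 s c ≠ 0` on `(0, π)`, the theorem reduces to the
polynomial identity `husimiPoly_commutator`, which holds modulo `e f = 1` alone. -/

section Polynomial

variable (A B : Matrix (Fin 2) (Fin 2) ℂ) (c s e f : ℂ)

def husimiPoly : ℂ :=
  c * c * A 0 0 + c * s * (e * A 0 1 + f * A 1 0) + s * s * A 1 1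

/-- The θ-derivative of `husimiPoly`, using `c' = -s/2` and `s' = c/2`. -/
def husimiPolyθ : ℂ :=
  -(c * s) * A 0 0 + (c ^ 2 - s ^ 2) / 2 * (e * A 0 1 + f * A 1 0) + c * s * A 1 1

/-- The φ-derivative of `husimiPoly`, using `e' = i e` and `f' = -i f`. -/
def husimiPolyφ : ℂ :=
  I * (c * s) * (e * A 0 1 - f * A 1 0)

variable {c s e f} in
theorem husimiPoly_commutator (hef : e * f = 1) :
    c * s * husimiPoly (-I • (A * B - B * A)) c s e f =
      husimiPolyθ A c s e f * husimiPolyφ B c s e f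
        - husimiPolyφ A c s e f * husimiPolyθ B c s e f := by
  simp only [husimiPoly, husimiPolyθ, husimiPolyφ, Matrix.smul_apply, Matrix.sub_apply,
    Matrix.mul_apply, Fin.sum_univ_two, smul_eq_mul]
  linear_combination (I * c * s * (c ^ 2 - s ^ 2) * (A 0 1 * B 1 0 - A 1 0 * B 0 1)) * hef

end Polynomial

theorem Qfun_eq_husimiPoly (A : Matrix (Fin 2) (Fin 2) ℂ) (θ φ : ℝ) :
    Qfun A θ φ = (1 / (2 * π) : ℂ) *
      husimiPoly A (Real.cos (θ / 2)) (Real.sin (θ / 2)) (exp (I * φ)) (exp (-(I * φ))) := by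
  have hconj : (starRingEnd ℂ) (exp (I * φ)) = exp (-(I * φ)) := by
    rw [← exp_conj, map_mul, conj_I, conj_ofReal, neg_mul]
  have hunit : exp (-(I * φ)) * exp (I * φ) = 1 := by
    rw [← Complex.exp_add, neg_add_cancel, Complex.exp_zero]
  simp only [Qfun, husimiPoly, cohVec, Fin.sum_univ_two, cons_val_zero, cons_val_one,
    map_mul, hconj, conj_ofReal]
  linear_combination (1 / (2 * π) : ℂ) * (Real.sin (θ / 2) : ℂ) ^ 2 * A 1 1 * hunit

theorem hasDerivAt_Qfun_theta (A : Matrix (Fin 2) (Fin 2) ℂ) (θ φ : ℝ) :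
    HasDerivAt (fun t => Qfun A t φ) ((1 / (2 * π) : ℂ) *
      husimiPolyθ A (Real.cos (θ / 2)) (Real.sin (θ / 2)) (exp (I * φ)) (exp (-(I * φ)))) θ := by
  have hhalf : HasDerivAt (fun t : ℝ => t / 2) (1 / 2) θ := (hasDerivAt_id θ).div_const 2
  have hc : HasDerivAt (fun t : ℝ => (Real.cos (t / 2) : ℂ)) (-Real.sin (θ / 2) * (1 / 2) : ℝ) θ :=
    ((Real.hasDerivAt_cos _).comp θ hhalf).ofReal_comp
  have hs : HasDerivAt (fun t : ℝ => (Real.sin (t / 2) : ℂ)) (Real.cos (θ / 2) * (1 / 2) : ℝ) θ :=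
    ((Real.hasDerivAt_sin _).comp θ hhalf).ofReal_comp
  simp only [Qfun_eq_husimiPoly, husimiPoly]
  refine (((((hc.fun_mul hc).mul_const (A 0 0)).fun_add
    ((hc.fun_mul hs).mul_const (exp (I * φ) * A 0 1 + exp (-(I * φ)) * A 1 0))).fun_add
    ((hs.fun_mul hs).mul_const (A 1 1))).const_mul (1 / (2 * π) : ℂ)).congr_deriv ?_
  simp only [husimiPolyθ]
  push_cast
  ring

theorem hasDerivAt_Qfun_phi (A : Matrix (Fin 2) (Fin 2) ℂ) (θ φ : ℝ) :
    HasDerivAt (fun p => Qfun A θ p) ((1 / (2 * π) : ℂ) *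
      husimiPolyφ A (Real.cos (θ / 2)) (Real.sin (θ / 2)) (exp (I * φ)) (exp (-(I * φ)))) φ := by
  have hIφ : HasDerivAt (fun p : ℝ => I * p) (I * 1) φ :=
    (hasDerivAt_id φ).ofReal_comp.const_mul I
  have he := (hIφ.cexp.mul_const (A 0 1)).fun_add (hIφ.fun_neg.cexp.mul_const (A 1 0))
  simp only [Qfun_eq_husimiPoly, husimiPoly]
  refine ((((hasDerivAt_const φ _).fun_add (he.const_mul _)).fun_add
    (hasDerivAt_const φ _)).const_mul (1 / (2 * π) : ℂ)).congr_deriv ?_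
  simp only [husimiPolyφ]
  ring

/-- the sine bracket equals a scaled Poisson bracket on the sphere. -/
theorem sine_bracket_is_poisson_bracket (A B : Matrix (Fin 2) (Fin 2) ℂ)
    (θ φ : ℝ) (hθ : θ ∈ Set.Ioo (0 : ℝ) Real.pi) :
    Qfun ((-Complex.I) • (A * B - B * A)) θ φ =
      ((4 * Real.pi / Real.sin θ : ℝ) : ℂ) *
        (Qθ A θ φ * Qφ B θ φ - Qφ A θ φ * Qθ B θ φ) := by
  obtain ⟨hθ0, hθπ⟩ := hθ
  have hs : (Real.sin (θ / 2) : ℂ) ≠ 0 := ofReal_ne_zero.mpr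
    (Real.sin_pos_of_pos_of_lt_pi (by linarith) (by linarith [pi_pos])).ne'
  have hc : (Real.cos (θ / 2) : ℂ) ≠ 0 := ofReal_ne_zero.mpr
    (Real.cos_pos_of_mem_Ioo ⟨by linarith [pi_pos], by linarith⟩).ne'
  have hcoef : ((4 * π / Real.sin θ : ℝ) : ℂ) =
      4 * π / (2 * (Real.sin (θ / 2) : ℂ) * (Real.cos (θ / 2) : ℂ)) := by
    have hsin : Real.sin θ = 2 * Real.sin (θ / 2) * Real.cos (θ / 2) := by
      rw [← Real.sin_two_mul, mul_div_cancel₀ θ two_ne_zero]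
    simp only [hsin, ofReal_div, ofReal_mul, ofReal_ofNat]
  have hef : exp (I * φ) * exp (-(I * φ)) = 1 := by
    rw [← Complex.exp_add, add_neg_cancel, Complex.exp_zero]
  have hbracket := husimiPoly_commutator A B (c := Real.cos (θ / 2)) (s := Real.sin (θ / 2)) hef
  rw [Qθ, Qθ, Qφ, Qφ, (hasDerivAt_Qfun_theta A θ φ).deriv, (hasDerivAt_Qfun_theta B θ φ).deriv,
    (hasDerivAt_Qfun_phi A θ φ).deriv, (hasDerivAt_Qfun_phi B θ φ).deriv, Qfun_eq_husimiPoly,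
    hcoef]
  field_simp
  linear_combination 4 * hbracket
end
end

section
/- For all 2×2 complex matrices A and B and all θ ∈ (0,π), φ ∈ ℝ, the cosine bracket equals the inverse-metric form on the sphere: Q_{AB+BA}(θ,φ) = 4π·( Q_A·Q_B + ∂Q_A/∂θ · ∂Q_B/∂θ + (1/sin²θ)·∂Q_A/∂φ · ∂Q_B/∂φ ). -/
/-!
Write `A = a₀ + a·σ` in the Pauli basis. Then `2π Q_A = a₀ + a·r̂` with `r̂` the Bloch vector of
`|θ,φ⟩`, so `2π ∂_θ Q_A = a·θ̂` and `2π ∂_φ Q_A = sin θ (a·φ̂)`. As `(r̂, θ̂, φ̂)` is an orthonormal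
frame, `(a·r̂)(b·r̂) + (a·θ̂)(b·θ̂) + (a·φ̂)(b·φ̂) = a·b`, and the right-hand side becomes
`(a₀b₀ + a·b + a₀ b·r̂ + b₀ a·r̂)/π`, which is `Q` of `AB + BA = 2(a₀b₀ + a·b) + 2(a₀b + b₀a)·σ`.
-/

open Matrix Complex Real MeasureTheory

noncomputable section

theorem HasDerivAt.const_dotProduct {ι 𝕜 R : Type*} [Fintype ι] [NontriviallyNormedField 𝕜]
    [NormedCommRing R] [NormedAlgebra 𝕜 R] {f : 𝕜 → ι → R} {f' : ι → R} {x : 𝕜} (a : ι → R)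
    (hf : ∀ i, HasDerivAt (fun t => f t i) (f' i) x) :
    HasDerivAt (fun t => a ⬝ᵥ f t) (a ⬝ᵥ f') x :=
  HasDerivAt.fun_sum fun i _ => (hf i).const_mul (a i)

def rHat (θ φ : ℝ) : Fin 3 → ℂ :=
  ![(Real.sin θ * Real.cos φ : ℝ), (Real.sin θ * Real.sin φ : ℝ), (Real.cos θ : ℝ)]

def θHat (θ φ : ℝ) : Fin 3 → ℂ :=
  ![(Real.cos θ * Real.cos φ : ℝ), (Real.cos θ * Real.sin φ : ℝ), (-Real.sin θ : ℝ)]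

def φHat (φ : ℝ) : Fin 3 → ℂ :=
  ![(-Real.sin φ : ℝ), (Real.cos φ : ℝ), 0]

theorem hasDerivAt_rHat_θ (θ φ : ℝ) (i : Fin 3) :
    HasDerivAt (fun t => rHat t φ i) (θHat θ φ i) θ := by
  fin_cases i
  · exact ((Real.hasDerivAt_sin θ).mul_const _).ofReal_comp
  · exact ((Real.hasDerivAt_sin θ).mul_const _).ofReal_comp
  · exact (Real.hasDerivAt_cos θ).ofReal_comp

theorem hasDerivAt_rHat_φ (θ φ : ℝ) (i : Fin 3) :
    HasDerivAt (fun p => rHat θ p i) (((Real.sin θ : ℂ) • φHat φ) i) φ := by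
  fin_cases i
  · simpa [rHat, φHat] using ((Real.hasDerivAt_cos φ).const_mul (Real.sin θ)).ofReal_comp
  · simpa [rHat, φHat] using ((Real.hasDerivAt_sin φ).const_mul (Real.sin θ)).ofReal_comp
  · simpa [rHat, φHat] using hasDerivAt_const φ (Real.cos θ : ℂ)

theorem dotProduct_rHat_add_θHat_add_φHat (a b : Fin 3 → ℂ) (θ φ : ℝ) :
    (a ⬝ᵥ rHat θ φ) * (b ⬝ᵥ rHat θ φ) + (a ⬝ᵥ θHat θ φ) * (b ⬝ᵥ θHat θ φ)
      + (a ⬝ᵥ φHat φ) * (b ⬝ᵥ φHat φ) = a ⬝ᵥ b := by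
  have hθ : (Real.sin θ : ℂ) ^ 2 + Real.cos θ ^ 2 = 1 := by
    norm_cast; exact Real.sin_sq_add_cos_sq θ
  have hφ : (Real.sin φ : ℂ) ^ 2 + Real.cos φ ^ 2 = 1 := by
    norm_cast; exact Real.sin_sq_add_cos_sq φ
  simp only [rHat, θHat, φHat, dotProduct, Fin.sum_univ_three, cons_val_zero, cons_val_one,
    cons_val_two, tail_cons, head_cons, ofReal_mul, ofReal_neg]
  linear_combination (a 0 * b 0 * Real.cos φ ^ 2 + a 1 * b 1 * Real.sin φ ^ 2 + a 2 * b 2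
    + (a 0 * b 1 + a 1 * b 0) * Real.cos φ * Real.sin φ) * hθ + (a 0 * b 0 + a 1 * b 1) * hφ

def pauliScalar (A : Matrix (Fin 2) (Fin 2) ℂ) : ℂ := (A 0 0 + A 1 1) / 2

def pauliVec (A : Matrix (Fin 2) (Fin 2) ℂ) : Fin 3 → ℂ :=
  ![(A 0 1 + A 1 0) / 2, I * (A 0 1 - A 1 0) / 2, (A 0 0 - A 1 1) / 2]

theorem pauliScalar_anticomm (A B : Matrix (Fin 2) (Fin 2) ℂ) :
    pauliScalar (A * B + B * A) =
      2 * (pauliScalar A * pauliScalar B + pauliVec A ⬝ᵥ pauliVec B) := by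
  simp only [pauliScalar, pauliVec, dotProduct, Fin.sum_univ_three, cons_val_zero, cons_val_one,
    cons_val_two, tail_cons, head_cons, Matrix.add_apply, Matrix.mul_apply, Fin.sum_univ_two]
  linear_combination -(A 0 1 - A 1 0) * (B 0 1 - B 1 0) / 2 * I_sq

theorem pauliVec_anticomm (A B : Matrix (Fin 2) (Fin 2) ℂ) :
    pauliVec (A * B + B * A) =
      (2 : ℂ) • (pauliScalar A • pauliVec B + pauliScalar B • pauliVec A) := by
  ext i
  fin_cases i <;>
  · simp only [pauliScalar, pauliVec, Matrix.add_apply, Matrix.mul_apply, Fin.sum_univ_two,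
      Pi.add_apply, Pi.smul_apply, smul_eq_mul, cons_val_zero, cons_val_one, cons_val_two,
      tail_cons, head_cons, Fin.zero_eta, Fin.mk_one, Fin.reduceFinMk]
    ring

theorem Qfun_eq_pauli (A : Matrix (Fin 2) (Fin 2) ℂ) (θ φ : ℝ) :
    Qfun A θ φ = (1 / (2 * π) : ℂ) * (pauliScalar A + pauliVec A ⬝ᵥ rHat θ φ) := by
  have hc : (Real.cos (θ / 2) : ℂ) ^ 2 = (1 + Real.cos θ) / 2 := by
    norm_cast; rw [Real.cos_sq, mul_div_cancel₀ θ two_ne_zero]; ring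
  have hs : (Real.sin (θ / 2) : ℂ) ^ 2 = (1 - Real.cos θ) / 2 := by
    norm_cast; rw [Real.sin_sq, Real.cos_sq, mul_div_cancel₀ θ two_ne_zero]; ring
  have hsc : (Real.sin θ : ℂ) = 2 * Real.sin (θ / 2) * Real.cos (θ / 2) := by
    norm_cast; rw [← Real.sin_two_mul, mul_div_cancel₀ θ two_ne_zero]
  have hφ : (Real.sin φ : ℂ) ^ 2 + Real.cos φ ^ 2 = 1 := by
    norm_cast; exact Real.sin_sq_add_cos_sq φ
  simp only [Qfun, cohVec]
  rw [mul_comm I, Complex.exp_mul_I, ← ofReal_cos, ← ofReal_sin]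
  simp only [pauliScalar, pauliVec, rHat, dotProduct, Fin.sum_univ_two,
    Fin.sum_univ_three, cons_val_zero, cons_val_one, cons_val_two, tail_cons, head_cons, map_mul,
    map_add, conj_ofReal, conj_I, ofReal_mul]
  linear_combination (1 / (2 * π) : ℂ) * (A 0 0 * hc + A 1 1 * (hs + Real.sin (θ / 2) ^ 2 * hφ
    - Real.sin (θ / 2) ^ 2 * Real.sin φ ^ 2 * I_sq)
    - (A 0 1 * (Real.cos φ + I * Real.sin φ) + A 1 0 * (Real.cos φ - I * Real.sin φ)) / 2 * hsc)

theorem Qθ_eq_pauli (A : Matrix (Fin 2) (Fin 2) ℂ) (θ φ : ℝ) :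
    Qθ A θ φ = (1 / (2 * π) : ℂ) * (pauliVec A ⬝ᵥ θHat θ φ) := by
  simp only [Qθ, Qfun_eq_pauli]
  exact (((HasDerivAt.const_dotProduct _ (hasDerivAt_rHat_θ θ φ)).const_add _).const_mul _).deriv

theorem Qφ_eq_pauli (A : Matrix (Fin 2) (Fin 2) ℂ) (θ φ : ℝ) :
    Qφ A θ φ = (1 / (2 * π) : ℂ) * (Real.sin θ * (pauliVec A ⬝ᵥ φHat φ)) := by
  simp only [Qφ, Qfun_eq_pauli]
  convert (((HasDerivAt.const_dotProduct _ (hasDerivAt_rHat_φ θ φ)).const_add _).const_mul _).deriv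
    using 2
  rw [dotProduct_smul, smul_eq_mul]

/-- the cosine bracket equals the inverse-metric form on the sphere. -/
theorem cosine_bracket_inverse_metric_form (A B : Matrix (Fin 2) (Fin 2) ℂ)
    (θ φ : ℝ) (hθ : θ ∈ Set.Ioo (0 : ℝ) Real.pi) :
    Qfun (A * B + B * A) θ φ =
      (4 * Real.pi : ℂ) *
        (Qfun A θ φ * Qfun B θ φ + Qθ A θ φ * Qθ B θ φ
          + ((1 / (Real.sin θ) ^ 2 : ℝ) : ℂ) * Qφ A θ φ * Qφ B θ φ) := by
  have hsin : (Real.sin θ : ℂ) ≠ 0 :=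
    ofReal_ne_zero.2 (Real.sin_pos_of_pos_of_lt_pi hθ.1 hθ.2).ne'
  have hframe := dotProduct_rHat_add_θHat_add_φHat (pauliVec A) (pauliVec B) θ φ
  simp only [Qfun_eq_pauli, Qθ_eq_pauli, Qφ_eq_pauli, pauliScalar_anticomm, pauliVec_anticomm,
    add_dotProduct, smul_dotProduct, smul_eq_mul, ofReal_div, ofReal_one, ofReal_pow]
  field_simp
  linear_combination -4 * hframe
end
end

section
/- For all 2×2 complex matrices A and B and all θ ∈ (0,π), φ ∈ ℝ, the Moyal star product on the qubit Q-function phase space admits the closed form Q_{AB}(θ,φ) = 2π·( Q_A·Q_B + ∂Q_A/∂θ · ∂Q_B/∂θ + (1/sin²θ)·∂Q_A/∂φ · ∂Q_B/∂φ ) + (2πi/sinθ)·( ∂Q_A/∂θ · ∂Q_B/∂φ − ∂Q_A/∂φ · ∂Q_B/∂θ ), where AB is the matrix product. -/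
/-!
Write `n = |θ,φ⟩` and `m = 2 ∂_θ n = (-sin(θ/2), e^{iφ} cos(θ/2))`. Then `n n* + m m* = 1`, so
inserting it between `A` and `B` gives `⟨n|AB|n⟩ = ⟨n|A|n⟩⟨n|B|n⟩ + ⟨n|A|m⟩⟨m|B|n⟩`.
Since `∂_θ n = m / 2` and `∂_φ n = i sin²(θ/2) n + (i sin θ / 2) m`, the derivatives of `Q_A` see
only the off-diagonal elements `a⁺ = ⟨n|A|m⟩`, `a⁻ = ⟨m|A|n⟩`:
`4π ∂_θ Q_A = a⁺ + a⁻` and `4π ∂_φ Q_A = i sin θ (a⁺ - a⁻)`. With these, the derivative terms of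
the closed form collapse to `a⁺ b⁻ / 2π`.
-/

open Matrix Complex Real MeasureTheory

noncomputable section

def matrixElement {n R : Type*} [Fintype n] [NonUnitalNonAssocSemiring R] [Star R]
    (u : n → R) (A : Matrix n n R) (v : n → R) : R :=
  star u ⬝ᵥ A *ᵥ v

section MatrixElement

variable {n R : Type*} [Fintype n] [CommSemiring R] [StarRing R]

theorem matrixElement_eq_sum (u : n → R) (A : Matrix n n R) (v : n → R) :
    matrixElement u A v = ∑ k, ∑ l, star (u k) * A k l * v l := by
  simp [matrixElement, dotProduct, mulVec, Finset.mul_sum, mul_assoc]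

theorem matrixElement_add_left (u u' : n → R) (A : Matrix n n R) (v : n → R) :
    matrixElement (u + u') A v = matrixElement u A v + matrixElement u' A v := by
  simp [matrixElement, add_dotProduct]

theorem matrixElement_add_right (u : n → R) (A : Matrix n n R) (v v' : n → R) :
    matrixElement u A (v + v') = matrixElement u A v + matrixElement u A v' := by
  simp [matrixElement, mulVec_add]

theorem matrixElement_smul_left (a : R) (u : n → R) (A : Matrix n n R) (v : n → R) :
    matrixElement (a • u) A v = star a * matrixElement u A v := by
  simp [matrixElement, star_smul]

theorem matrixElement_smul_right (a : R) (u : n → R) (A : Matrix n n R) (v : n → R) :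
    matrixElement u A (a • v) = a * matrixElement u A v := by
  rw [matrixElement, matrixElement, mulVec_smul, dotProduct_smul, smul_eq_mul]

theorem matrixElement_mul_vecMulVec_mul (x y u w : n → R) (A B : Matrix n n R) :
    matrixElement x (A * vecMulVec u (star w) * B) y =
      matrixElement x A u * matrixElement w B y := by
  rw [matrixElement, mul_vecMulVec, vecMulVec_mul, vecMulVec_mulVec, dotProduct_smul,
    ← dotProduct_mulVec]
  simp [matrixElement]

theorem matrixElement_mul_of_vecMulVec_add_eq_one [DecidableEq n] {u v : n → R}
    (h : vecMulVec u (star u) + vecMulVec v (star v) = 1) (x y : n → R) (A B : Matrix n n R) :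
    matrixElement x (A * B) y =
      matrixElement x A u * matrixElement u B y + matrixElement x A v * matrixElement v B y := by
  rw [← matrixElement_mul_vecMulVec_mul, ← matrixElement_mul_vecMulVec_mul, matrixElement,
    matrixElement, matrixElement, ← dotProduct_add, ← add_mulVec, ← Matrix.add_mul,
    ← Matrix.mul_add, h, Matrix.mul_one]

end MatrixElement

theorem HasDerivAt.matrixElement {n 𝕜 : Type*} [Fintype n] [RCLike 𝕜] {u v : ℝ → n → 𝕜}
    {u' v' : n → 𝕜} {t : ℝ} (hu : HasDerivAt u u' t) (hv : HasDerivAt v v' t)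
    (A : Matrix n n 𝕜) :
    HasDerivAt (fun s => _root_.matrixElement (u s) A (v s))
      (_root_.matrixElement u' A (v t) + _root_.matrixElement (u t) A v') t := by
  simp only [matrixElement_eq_sum]
  have hterm : ∀ k l, HasDerivAt (fun s => star (u s k) * A k l * v s l)
      (star (u' k) * A k l * v t l + star (u t k) * A k l * v' l) t := fun k l =>
    ((hasDerivAt_pi.1 hu k).star.mul_const (A k l)).mul (hasDerivAt_pi.1 hv l)
  simpa only [Finset.sum_add_distrib] using
    HasDerivAt.fun_sum fun k _ => HasDerivAt.fun_sum fun l _ => hterm k l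

def cohVecPerp (θ φ : ℝ) : Fin 2 → ℂ :=
  ![-(Real.sin (θ / 2) : ℂ), Complex.exp (Complex.I * φ) * Real.cos (θ / 2)]

theorem vecMulVec_cohVec_add_vecMulVec_cohVecPerp (θ φ : ℝ) :
    vecMulVec (cohVec θ φ) (star (cohVec θ φ)) +
      vecMulVec (cohVecPerp θ φ) (star (cohVecPerp θ φ)) = 1 := by
  have hpyth : (Real.cos (θ / 2) : ℂ) ^ 2 + (Real.sin (θ / 2) : ℂ) ^ 2 = 1 := by
    exact_mod_cast Real.cos_sq_add_sin_sq (θ / 2)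
  have hexp : Complex.exp (Complex.I * φ) * starRingEnd ℂ (Complex.exp (Complex.I * φ)) = 1 := by
    rw [← Complex.exp_conj, ← Complex.exp_add]
    simp
  ext i j
  rw [Matrix.add_apply, vecMulVec_apply, vecMulVec_apply]
  fin_cases i <;> fin_cases j <;>
    simp only [cohVec, cohVecPerp, Pi.star_apply, Complex.star_def, map_mul, map_neg,
      Complex.conj_ofReal, Fin.zero_eta, Fin.mk_one, cons_val_zero, cons_val_one, cons_val_fin_one,
      one_apply_eq, one_apply_ne, ne_eq, zero_ne_one, one_ne_zero, not_false_eq_true]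
  · linear_combination hpyth
  · ring
  · ring
  · linear_combination
      (Complex.exp (Complex.I * φ) * starRingEnd ℂ (Complex.exp (Complex.I * φ))) * hpyth + hexp

theorem hasDerivAt_cohVec_theta (θ φ : ℝ) :
    HasDerivAt (fun t => cohVec t φ) ((1 / 2 : ℂ) • cohVecPerp θ φ) θ := by
  have hhalf : HasDerivAt (fun t : ℝ => t / 2) (1 / 2) θ := (hasDerivAt_id θ).div_const 2
  have hcos := ((Real.hasDerivAt_cos (θ / 2)).comp θ hhalf).ofReal_comp
  have hsin := ((Real.hasDerivAt_sin (θ / 2)).comp θ hhalf).ofReal_comp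
  rw [hasDerivAt_pi, Fin.forall_fin_two]
  refine ⟨hcos.congr_deriv ?_, (hsin.const_mul (Complex.exp (Complex.I * φ))).congr_deriv ?_⟩ <;>
    simp only [cohVecPerp, Pi.smul_apply, smul_eq_mul, cons_val_zero, cons_val_one,
      cons_val_fin_one] <;> push_cast <;> ring

theorem hasDerivAt_cohVec_phi (θ φ : ℝ) :
    HasDerivAt (fun p => cohVec θ p)
      ((Complex.I * Real.sin (θ / 2) ^ 2) • cohVec θ φ +
        (Complex.I * Real.sin (θ / 2) * Real.cos (θ / 2)) • cohVecPerp θ φ) φ := by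
  have hexp : HasDerivAt (fun p : ℝ => Complex.exp (Complex.I * p))
      (Complex.exp (Complex.I * φ) * Complex.I) φ := by
    simpa using ((hasDerivAt_id φ).ofReal_comp.const_mul Complex.I).cexp
  have hpyth : (Real.cos (θ / 2) : ℂ) ^ 2 + (Real.sin (θ / 2) : ℂ) ^ 2 = 1 := by
    exact_mod_cast Real.cos_sq_add_sin_sq (θ / 2)
  rw [hasDerivAt_pi, Fin.forall_fin_two]
  refine ⟨(hasDerivAt_const φ _).congr_deriv ?_,
    (hexp.mul_const (Real.sin (θ / 2) : ℂ)).congr_deriv ?_⟩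
  all_goals simp only [Pi.add_apply, Pi.smul_apply, smul_eq_mul, cohVec, cohVecPerp,
    cons_val_zero, cons_val_one, cons_val_fin_one]
  · ring
  · linear_combination (-Complex.I * Complex.exp (Complex.I * φ) * Real.sin (θ / 2)) * hpyth

theorem Qfun_eq_matrixElement (A : Matrix (Fin 2) (Fin 2) ℂ) (θ φ : ℝ) :
    Qfun A θ φ = (1 / (2 * π) : ℂ) * matrixElement (cohVec θ φ) A (cohVec θ φ) := by
  simp [Qfun, matrixElement_eq_sum]

theorem Qθ_eq_matrixElement (A : Matrix (Fin 2) (Fin 2) ℂ) (θ φ : ℝ) :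
    Qθ A θ φ = (1 / (2 * π) : ℂ) * ((1 / 2) *
      (matrixElement (cohVecPerp θ φ) A (cohVec θ φ) +
        matrixElement (cohVec θ φ) A (cohVecPerp θ φ))) := by
  have h := (HasDerivAt.matrixElement (hasDerivAt_cohVec_theta θ φ)
    (hasDerivAt_cohVec_theta θ φ) A).const_mul (1 / (2 * π) : ℂ)
  have hhalf : star (1 / 2 : ℂ) = 1 / 2 := by simp
  simp only [Qθ, Qfun_eq_matrixElement, h.deriv, matrixElement_smul_left,
    matrixElement_smul_right, hhalf]
  ring

theorem Qφ_eq_matrixElement (A : Matrix (Fin 2) (Fin 2) ℂ) (θ φ : ℝ) :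
    Qφ A θ φ = (1 / (2 * π) : ℂ) * (Complex.I * Real.sin θ / 2 *
      (matrixElement (cohVec θ φ) A (cohVecPerp θ φ) -
        matrixElement (cohVecPerp θ φ) A (cohVec θ φ))) := by
  have h := (HasDerivAt.matrixElement (hasDerivAt_cohVec_phi θ φ)
    (hasDerivAt_cohVec_phi θ φ) A).const_mul (1 / (2 * π) : ℂ)
  have hsin : (Real.sin θ : ℂ) = 2 * Real.sin (θ / 2) * Real.cos (θ / 2) := by
    have h := Real.sin_two_mul (θ / 2)
    rw [show 2 * (θ / 2) = θ by ring] at h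
    exact_mod_cast h
  simp only [Qφ, Qfun_eq_matrixElement, h.deriv, matrixElement_add_left, matrixElement_add_right,
    matrixElement_smul_left, matrixElement_smul_right]
  simp only [Complex.star_def, map_mul, map_pow, Complex.conj_I, Complex.conj_ofReal, hsin]
  ring

/-- closed form of the Moyal star product on the qubit Q-function
phase space: Q_{AB} in terms of Q_A, Q_B and their first derivatives. -/
theorem moyal_star_product_closed_form (A B : Matrix (Fin 2) (Fin 2) ℂ)
    (θ φ : ℝ) (hθ : θ ∈ Set.Ioo (0 : ℝ) Real.pi) :
    Qfun (A * B) θ φ =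
      (2 * Real.pi : ℂ) *
        (Qfun A θ φ * Qfun B θ φ + Qθ A θ φ * Qθ B θ φ
          + ((1 / (Real.sin θ) ^ 2 : ℝ) : ℂ) * Qφ A θ φ * Qφ B θ φ)
      + (2 * Real.pi : ℂ) * Complex.I * ((1 / Real.sin θ : ℝ) : ℂ) *
          (Qθ A θ φ * Qφ B θ φ - Qφ A θ φ * Qθ B θ φ) := by
  have hsin : (Real.sin θ : ℂ) ≠ 0 :=
    Complex.ofReal_ne_zero.2 (Real.sin_pos_of_pos_of_lt_pi hθ.1 hθ.2).ne'
  have hπ : (π : ℂ) ≠ 0 := Complex.ofReal_ne_zero.2 Real.pi_ne_zero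
  simp only [Qfun_eq_matrixElement, Qθ_eq_matrixElement, Qφ_eq_matrixElement,
    matrixElement_mul_of_vecMulVec_add_eq_one (vecMulVec_cohVec_add_vecMulVec_cohVecPerp θ φ),
    Complex.ofReal_div, Complex.ofReal_one, Complex.ofReal_pow]
  field_simp
  rw [Complex.I_sq]
  ring
end
end

section
/- For every 2×2 complex matrix ρ and all θ ∈ (0,π), φ ∈ ℝ, the Husimi Q function satisfies the Laplace–Beltrami eigenvalue relation (1/sinθ)·∂/∂θ( sinθ · ∂Q_ρ/∂θ ) + (1/sin²θ)·∂²Q_ρ/∂φ² = −2·( Q_ρ(θ,φ) − Tr(ρ)/(4π) ); that is, the non-constant part of any one-qubit quasi-probability function lies entirely in the ℓ = 1 eigenspace of the spherical Laplacian, which is the spectral fact underlying the heat-kernel (diffusion) maps between the Q, Wigner, and P representations. -/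
open Matrix Complex Real MeasureTheory

noncomputable section

/-!
A spin coherent state has Bloch vector (sin θ cos φ, sin θ sin φ, cos θ), so
`Q_ρ = (Tr ρ + (ρ₀₀ - ρ₁₁) cos θ + (ρ₀₁ e^{iφ} + ρ₁₀ e^{-iφ}) sin θ) / 4π`: a constant plus
a combination of the degree-one spherical harmonics `cos θ` and `e^{±iφ} sin θ`. For any
`f = a + b cos θ + g(φ) sin θ` with `g'' = -g`, a direct computation using
`sin² θ + cos² θ = 1` gives `Δ f = -2 (f - a)`.
-/

def sphericalLaplacian (f : ℝ → ℝ → ℂ) (θ φ : ℝ) : ℂ :=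
  ((1 / Real.sin θ : ℝ) : ℂ) *
      deriv (fun t => ((Real.sin t : ℝ) : ℂ) * deriv (fun t' => f t' φ) t) θ
    + ((1 / (Real.sin θ) ^ 2 : ℝ) : ℂ) * deriv (fun p => deriv (fun p' => f θ p') p) φ

lemma hasDerivAt_add_mul_cos_add_mul_sin (a b c : ℂ) (t : ℝ) :
    HasDerivAt (fun t : ℝ => a + b * Real.cos t + c * Real.sin t)
      (-b * Real.sin t + c * Real.cos t) t := by
  have hcos := (Real.hasDerivAt_cos t).ofReal_comp.const_mul b
  have hsin := (Real.hasDerivAt_sin t).ofReal_comp.const_mul c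
  exact (((hasDerivAt_const t a).add hcos).add hsin).congr_deriv (by push_cast; ring)

lemma deriv_sin_mul_deriv_add_mul_cos_add_mul_sin (a b c : ℂ) (θ : ℝ) :
    deriv (fun t : ℝ => (Real.sin t : ℂ) *
        deriv (fun t' => a + b * Real.cos t' + c * Real.sin t') t) θ
      = -2 * b * Real.sin θ * Real.cos θ + c * (Real.cos θ ^ 2 - Real.sin θ ^ 2) := by
  have hinner : deriv (fun t' : ℝ => a + b * Real.cos t' + c * Real.sin t')
      = fun t : ℝ => 0 + c * Real.cos t + -b * Real.sin t := by
    funext t; rw [(hasDerivAt_add_mul_cos_add_mul_sin a b c t).deriv]; ring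
  have hprod : HasDerivAt (fun t : ℝ => (Real.sin t : ℂ) * (0 + c * Real.cos t + -b * Real.sin t))
      (Real.cos θ * (0 + c * Real.cos θ + -b * Real.sin θ)
        + Real.sin θ * (-c * Real.sin θ + -b * Real.cos θ)) θ :=
    (Real.hasDerivAt_sin θ).ofReal_comp.mul (hasDerivAt_add_mul_cos_add_mul_sin 0 c (-b) θ)
  rw [hinner, hprod.deriv]
  ring

lemma deriv_deriv_const_add_mul_const (a s : ℂ) (g : ℝ → ℂ) (φ : ℝ) :
    deriv (fun p => deriv (fun p' => a + g p' * s) p) φ = deriv (deriv g) φ * s := by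
  simp only [deriv_const_add', deriv_mul_const_field']

theorem sphericalLaplacian_degree_one (a b : ℂ) (g : ℝ → ℂ) {θ φ : ℝ}
    (hsin : Real.sin θ ≠ 0) (hg : deriv (deriv g) φ = -g φ) :
    sphericalLaplacian (fun θ φ => a + b * Real.cos θ + g φ * Real.sin θ) θ φ
      = -2 * (b * Real.cos θ + g φ * Real.sin θ) := by
  rw [sphericalLaplacian, deriv_sin_mul_deriv_add_mul_cos_add_mul_sin,
    deriv_deriv_const_add_mul_const, hg]
  have hsinC : (Real.sin θ : ℂ) ≠ 0 := by exact_mod_cast hsin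
  have hpyth : (Real.sin θ : ℂ) ^ 2 + (Real.cos θ : ℂ) ^ 2 = 1 := by
    exact_mod_cast Real.sin_sq_add_cos_sq θ
  simp only [ofReal_div, ofReal_one, ofReal_pow]
  field_simp
  linear_combination g φ * hpyth

lemma hasDerivAt_mul_exp_I_add_mul_exp_neg_I (c d : ℂ) (p : ℝ) :
    HasDerivAt (fun p : ℝ => c * exp (I * p) + d * exp (-I * p))
      ((I * c) * exp (I * p) + (-I * d) * exp (-I * p)) p := by
  have hexp (k : ℂ) : HasDerivAt (fun p : ℝ => exp (k * p)) (exp (k * p) * k) p := by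
    simpa using ((hasDerivAt_id (p : ℂ)).const_mul k).cexp.comp_ofReal
  exact (((hexp I).const_mul c).add ((hexp (-I)).const_mul d)).congr_deriv (by ring)

lemma deriv_deriv_mul_exp_I_add_mul_exp_neg_I (c d : ℂ) (φ : ℝ) :
    deriv (deriv fun p : ℝ => c * exp (I * p) + d * exp (-I * p)) φ
      = -(c * exp (I * φ) + d * exp (-I * φ)) := by
  have hderiv : deriv (fun p : ℝ => c * exp (I * p) + d * exp (-I * p))
      = fun p : ℝ => (I * c) * exp (I * p) + (-I * d) * exp (-I * p) :=
    funext fun p => (hasDerivAt_mul_exp_I_add_mul_exp_neg_I c d p).deriv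
  rw [hderiv, (hasDerivAt_mul_exp_I_add_mul_exp_neg_I (I * c) (-I * d) φ).deriv]
  linear_combination (c * exp (I * φ) + d * exp (-I * φ)) * I_sq

lemma Qfun_eq_degree_one (ρ : Matrix (Fin 2) (Fin 2) ℂ) (θ φ : ℝ) :
    Qfun ρ θ φ = trace ρ / ((4 * π : ℝ) : ℂ)
      + (ρ 0 0 - ρ 1 1) / ((4 * π : ℝ) : ℂ) * Real.cos θ
      + (ρ 0 1 / ((4 * π : ℝ) : ℂ) * exp (I * φ) + ρ 1 0 / ((4 * π : ℝ) : ℂ) * exp (-I * φ))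
        * Real.sin θ := by
  have h2 : 2 * (θ / 2) = θ := by ring
  have hcos_sq : (Real.cos (θ / 2) : ℂ) ^ 2 = (1 + Real.cos θ) / 2 := by
    conv_rhs => rw [← h2, Real.cos_two_mul]
    push_cast; ring
  have hsin_sq : (Real.sin (θ / 2) : ℂ) ^ 2 = (1 - Real.cos θ) / 2 := by
    conv_rhs => rw [← h2, Real.cos_two_mul_eq_one_sub]
    push_cast; ring
  have hsin_mul_cos : (Real.sin (θ / 2) : ℂ) * Real.cos (θ / 2) = Real.sin θ / 2 := by
    conv_rhs => rw [← h2, Real.sin_two_mul]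
    push_cast; ring
  have hconj : (starRingEnd ℂ) (exp (I * φ)) = exp (-I * φ) := by
    rw [← Complex.exp_conj]; simp
  have hexp : exp (-I * φ) * exp (I * φ) = 1 := by
    rw [← Complex.exp_add]; simp
  simp only [Qfun, cohVec, Fin.sum_univ_two, Matrix.cons_val_zero, Matrix.cons_val_one,
    map_mul, hconj, conj_ofReal, trace_fin_two, ofReal_mul, ofReal_ofNat]
  linear_combination (1 / (2 * π : ℂ)) * (ρ 0 0 * hcos_sq
    + (ρ 0 1 * exp (I * φ) + ρ 1 0 * exp (-I * φ)) * hsin_mul_cos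
    + ρ 1 1 * (hsin_sq + (Real.sin (θ / 2) : ℂ) ^ 2 * hexp))

/-- Laplace–Beltrami eigenvalue relation for the Q function:
(1/sinθ)·∂_θ(sinθ·∂_θQ_ρ) + (1/sin²θ)·∂²_φ Q_ρ = −2·(Q_ρ − Tr(ρ)/(4π)). -/
theorem q_function_laplace_beltrami_relation (ρ : Matrix (Fin 2) (Fin 2) ℂ)
    (θ φ : ℝ) (hθ : θ ∈ Set.Ioo (0 : ℝ) Real.pi) :
    ((1 / Real.sin θ : ℝ) : ℂ) *
        deriv (fun t => ((Real.sin t : ℝ) : ℂ) * deriv (fun t' => Qfun ρ t' φ) t) θ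
      + ((1 / (Real.sin θ) ^ 2 : ℝ) : ℂ) *
        deriv (fun p => deriv (fun p' => Qfun ρ θ p') p) φ
    = -2 * (Qfun ρ θ φ - Matrix.trace ρ / ((4 * Real.pi : ℝ) : ℂ)) := by
  have hsin : Real.sin θ ≠ 0 := (Real.sin_pos_of_pos_of_lt_pi hθ.1 hθ.2).ne'
  change sphericalLaplacian (Qfun ρ) θ φ = _
  rw [show Qfun ρ = _ from funext₂ (Qfun_eq_degree_one ρ),
    sphericalLaplacian_degree_one _ _ _ hsin (deriv_deriv_mul_exp_I_add_mul_exp_neg_I _ _ φ)]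
  ring
end
end
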